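/- Any two SIC POVMs in dimension two are unitarily equivalent: if ψ_1, …, ψ_4 and φ_1, …, φ_4 are unit vectors in ℂ² with |⟨ψ_j, ψ_k⟩|² = 1/3 and |⟨φ_j, φ_k⟩|² = 1/3 for all j ≠ k, then there exist a unitary U on ℂ², a permutation π of {1,2,3,4}, and complex numbers c_1, …, c_4 of modulus 1 such that U ψ_j = c_j φ_{π(j)} for all j. -/

import Mathlib

noncomputable section

open Complex Matrix

/-- The standard Hermitian inner product on `ℂ²`, conjugate-linear in the first argument. -/
def inn (x y : Fin 2 → ℂ) : ℂ := ∑ i, (starRingEnd ℂ) (x i) * y i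

/-!
Rephase a SIC so that `⟨ψ 0, ψ j⟩ = 1/√3` for `j ≠ 0`. Three vectors in `ℂ²` have a singular Gram
matrix, which forces `⟨ψ 1, ψ j⟩ = ±i/√3` for `j = 2, 3`. The two signs differ: `ψ 0, ψ 1` is a
basis, so a vector is determined by its inner products with them, and `ψ 2 ≠ ψ 3`. After possibly
swapping `ψ 2` and `ψ 3`, every SIC therefore has the same Gram rows at `ψ 0` and `ψ 1`, and two
families agreeing there are related by the unitary `B A⁻¹`, where the columns of `A` and `B` are
`ψ 0, ψ 1` and `φ 0, φ 1`.
-/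

open ComplexConjugate

theorem exists_mem_unitaryGroup_conjTranspose_mul_eq {𝕜 n : Type*} [Field 𝕜] [StarRing 𝕜]
    [Fintype n] [DecidableEq n] {A B : Matrix n n 𝕜} (hA : IsUnit A.det)
    (h : Aᴴ * A = Bᴴ * B) : ∃ U ∈ unitaryGroup n 𝕜, Bᴴ * U = Aᴴ := by
  have hBU : Bᴴ * (B * A⁻¹) = Aᴴ := by
    rw [← Matrix.mul_assoc, ← h, Matrix.mul_assoc, mul_nonsing_inv A hA, Matrix.mul_one]
  refine ⟨B * A⁻¹, mem_unitaryGroup_iff'.mpr ?_, hBU⟩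
  rw [star_eq_conjTranspose, conjTranspose_mul, Matrix.mul_assoc, hBU, ← conjTranspose_mul,
    mul_nonsing_inv A hA, conjTranspose_one]

theorem exists_norm_eq_one_mul_eq_norm (z : ℂ) : ∃ c : ℂ, ‖c‖ = 1 ∧ c * z = ‖z‖ := by
  refine ⟨exp (↑(-arg z) * I), norm_exp_ofReal_mul_I _, ?_⟩
  calc exp (↑(-arg z) * I) * z = exp (↑(-arg z) * I) * (‖z‖ * exp (arg z * I)) := by
        rw [norm_mul_exp_arg_mul_I]
    _ = ‖z‖ := by
        rw [mul_left_comm, ← Complex.exp_add, ofReal_neg, neg_mul, neg_add_cancel,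
          Complex.exp_zero, mul_one]

lemma conj_inn (x y : Fin 2 → ℂ) : conj (inn x y) = inn y x := by
  simp [inn, mul_comm]

lemma inn_smul_left (c : ℂ) (x y : Fin 2 → ℂ) : inn (c • x) y = conj c * inn x y := by
  simp only [inn, Pi.smul_apply, smul_eq_mul, map_mul, Finset.mul_sum, mul_assoc]

lemma inn_smul_right (c : ℂ) (x y : Fin 2 → ℂ) : inn x (c • y) = c * inn x y := by
  simp only [inn, Pi.smul_apply, smul_eq_mul, Finset.mul_sum, mul_left_comm]

section Gram

variable {ι : Type*}

def innGram (v : ι → Fin 2 → ℂ) : Matrix ι ι ℂ := of fun i j => inn (v i) (v j)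

lemma conjTranspose_transpose_of_mulVec [Fintype ι] (v : ι → Fin 2 → ℂ) (x : Fin 2 → ℂ) :
    (of v)ᵀᴴ *ᵥ x = fun i => inn (v i) x := by
  ext i
  simp [mulVec, dotProduct, inn]

lemma innGram_eq_conjTranspose_mul [Fintype ι] (v : ι → Fin 2 → ℂ) :
    innGram v = (of v)ᵀᴴ * (of v)ᵀ := by
  ext i j
  simp [innGram, inn, mul_apply]

lemma det_innGram_eq_zero [Fintype ι] [DecidableEq ι] (v : ι → Fin 2 → ℂ)
    (h : 2 < Fintype.card ι) : (innGram v).det = 0 := by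
  by_contra hv
  have hrank := rank_of_isUnit _ ((isUnit_iff_isUnit_det _).mpr (isUnit_iff_ne_zero.mpr hv))
  have := (rank_mul_le_right (of v)ᵀᴴ (of v)ᵀ).trans (rank_le_card_height (of v)ᵀ)
  rw [← innGram_eq_conjTranspose_mul, hrank, Fintype.card_fin] at this
  omega

lemma eq_of_forall_inn_eq {v : Fin 2 → Fin 2 → ℂ} (hv : (innGram v).det ≠ 0)
    {x y : Fin 2 → ℂ} (h : ∀ i, inn (v i) x = inn (v i) y) : x = y := by
  rw [innGram_eq_conjTranspose_mul, det_mul] at hv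
  apply mulVec_injective_of_det_ne_zero (left_ne_zero_of_mul hv)
  simp only [conjTranspose_transpose_of_mulVec]
  exact funext h

theorem exists_mem_unitaryGroup_mulVec_eq_of_inn_eq {χ ω : ι → Fin 2 → ℂ} (b : Fin 2 → ι)
    (hb : (innGram (χ ∘ b)).det ≠ 0) (h : ∀ i j, inn (χ (b i)) (χ j) = inn (ω (b i)) (ω j)) :
    ∃ U ∈ unitaryGroup (Fin 2) ℂ, ∀ j, U *ᵥ χ j = ω j := by
  have hgram : innGram (χ ∘ b) = innGram (ω ∘ b) := by
    ext i j
    exact h i (b j)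
  have hA : IsUnit (of (χ ∘ b))ᵀ.det := by
    rw [innGram_eq_conjTranspose_mul, det_mul] at hb
    exact isUnit_iff_ne_zero.mpr (right_ne_zero_of_mul hb)
  obtain ⟨U, hU, hBU⟩ := exists_mem_unitaryGroup_conjTranspose_mul_eq (B := (of (ω ∘ b))ᵀ) hA
    (by rw [← innGram_eq_conjTranspose_mul, ← innGram_eq_conjTranspose_mul, hgram])
  refine ⟨U, hU, fun j => eq_of_forall_inn_eq (hgram ▸ hb) fun i => ?_⟩
  calc inn (ω (b i)) (U *ᵥ χ j) = ((of (ω ∘ b))ᵀᴴ *ᵥ (U *ᵥ χ j)) i := by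
        rw [conjTranspose_transpose_of_mulVec]; rfl
    _ = inn (χ (b i)) (χ j) := by
        rw [mulVec_mulVec, hBU, conjTranspose_transpose_of_mulVec]; rfl
    _ = inn (ω (b i)) (ω j) := h i j

end Gram

def sicOverlap : ℝ := √(1 / 3)

lemma ofReal_sicOverlap_sq : (sicOverlap : ℂ) ^ 2 = 1 / 3 := by
  rw [← ofReal_pow, sicOverlap, Real.sq_sqrt (by norm_num)]
  norm_num

lemma norm_eq_sicOverlap {z : ℂ} (h : ‖z‖ ^ 2 = 1 / 3) : ‖z‖ = sicOverlap := by
  rw [sicOverlap, ← h, Real.sqrt_sq (norm_nonneg z)]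

lemma det_innGram_ne_zero_of_inn_eq_sicOverlap {v : Fin 2 → Fin 2 → ℂ}
    (h0 : inn (v 0) (v 0) = 1) (h1 : inn (v 1) (v 1) = 1) (h01 : inn (v 0) (v 1) = sicOverlap) :
    (innGram v).det ≠ 0 := by
  have h10 : inn (v 1) (v 0) = sicOverlap := by rw [← conj_inn, h01, conj_ofReal]
  rw [innGram, det_fin_two, of_apply, of_apply, of_apply, of_apply, h0, h1, h01, h10,
    ← sq (sicOverlap : ℂ), ofReal_sicOverlap_sq]
  norm_num

lemma inn_eq_I_mul_sicOverlap_or_eq_neg {x y z : Fin 2 → ℂ} (hx : inn x x = 1) (hy : inn y y = 1)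
    (hz : inn z z = 1) (hxy : inn x y = sicOverlap) (hxz : inn x z = sicOverlap)
    (hyz : ‖inn y z‖ ^ 2 = 1 / 3) :
    inn y z = I * sicOverlap ∨ inn y z = -(I * sicOverlap) := by
  set a := inn y z
  have hyx : inn y x = sicOverlap := by rw [← conj_inn, hxy, conj_ofReal]
  have hzx : inn z x = sicOverlap := by rw [← conj_inn, hxz, conj_ofReal]
  have hzy : inn z y = conj a := (conj_inn y z).symm
  have haa : a * conj a = 1 / 3 := by rw [mul_conj, normSq_eq_norm_sq, hyz]; norm_num
  have hdet := det_innGram_eq_zero ![x, y, z] (by simp)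
  simp only [innGram, det_fin_three, of_apply, cons_val, hx, hy, hz, hxy, hxz, hyx, hzx,
    hzy] at hdet
  have hre : a.re = 0 := by
    -- the Gram determinant of `x, y, z` is `(a + conj a) / 3`
    have : a + conj a = 0 := by
      linear_combination 3 * hdet + 3 * haa + (6 - 3 * (a + conj a)) * ofReal_sicOverlap_sq
    rw [add_conj, ofReal_eq_zero] at this
    exact (mul_eq_zero.mp this).resolve_left two_ne_zero
  have him : |a.im| = sicOverlap := (abs_im_eq_norm.mpr hre).trans (norm_eq_sicOverlap hyz)
  have ha : a = I * a.im := Complex.ext (by simp [hre]) (by simp)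
  rcases (abs_eq (show 0 ≤ sicOverlap from Real.sqrt_nonneg _)).mp him with h | h
  · exact Or.inl (by rw [ha, h])
  · exact Or.inr (by rw [ha, h, ofReal_neg, mul_neg])

structure IsSIC (ψ : Fin 4 → Fin 2 → ℂ) : Prop where
  inn_self : ∀ j, inn (ψ j) (ψ j) = 1
  norm_inn_sq : ∀ j k, j ≠ k → ‖inn (ψ j) (ψ k)‖ ^ 2 = 1 / 3

def IsSICNormal (χ : Fin 4 → Fin 2 → ℂ) : Prop :=
  ∀ j, inn (χ 0) (χ j) = (![1, sicOverlap, sicOverlap, sicOverlap] : Fin 4 → ℂ) j ∧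
    inn (χ 1) (χ j) = (![sicOverlap, 1, I * sicOverlap, -(I * sicOverlap)] : Fin 4 → ℂ) j

theorem IsSICNormal.exists_mem_unitaryGroup_mulVec_eq {χ ω : Fin 4 → Fin 2 → ℂ}
    (hχ : IsSICNormal χ) (hω : IsSICNormal ω) :
    ∃ U ∈ unitaryGroup (Fin 2) ℂ, ∀ j, U *ᵥ χ j = ω j := by
  refine exists_mem_unitaryGroup_mulVec_eq_of_inn_eq ![0, 1]
    (det_innGram_ne_zero_of_inn_eq_sicOverlap (by simpa using (hχ 0).1) (by simpa using (hχ 1).2)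
      (by simpa using (hχ 1).1)) fun i j => ?_
  fin_cases i
  · simp [(hχ j).1, (hω j).1]
  · simp [(hχ j).2, (hω j).2]

namespace IsSIC

variable {ψ : Fin 4 → Fin 2 → ℂ}

lemma smul (hψ : IsSIC ψ) {c : Fin 4 → ℂ} (hc : ∀ j, ‖c j‖ = 1) :
    IsSIC fun j => c j • ψ j where
  inn_self j := by
    rw [inn_smul_left, inn_smul_right, hψ.inn_self, mul_one, mul_comm, mul_conj,
      normSq_eq_norm_sq, hc]
    norm_num
  norm_inn_sq j k hjk := by
    rw [inn_smul_left, inn_smul_right, norm_mul, norm_mul, norm_conj, hc, hc, one_mul, one_mul,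
      hψ.norm_inn_sq j k hjk]

lemma comp_perm (hψ : IsSIC ψ) (σ : Equiv.Perm (Fin 4)) : IsSIC (ψ ∘ σ) where
  inn_self j := hψ.inn_self (σ j)
  norm_inn_sq _ _ hjk := hψ.norm_inn_sq _ _ (σ.injective.ne hjk)

lemma exists_rephase (hψ : IsSIC ψ) : ∃ d : Fin 4 → ℂ, (∀ j, ‖d j‖ = 1) ∧
    ∀ j, j ≠ 0 → inn (d 0 • ψ 0) (d j • ψ j) = sicOverlap := by
  choose d hd hdψ using fun j => exists_norm_eq_one_mul_eq_norm (inn (ψ 0) (ψ j))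
  have hd0 : d 0 = 1 := by simpa [hψ.inn_self] using hdψ 0
  refine ⟨d, hd, fun j hj => ?_⟩
  rw [hd0, one_smul, inn_smul_right, hdψ, norm_eq_sicOverlap (hψ.norm_inn_sq 0 j hj.symm)]

lemma inn_one_two_and_inn_one_three_eq (hψ : IsSIC ψ)
    (h0 : ∀ j, j ≠ 0 → inn (ψ 0) (ψ j) = sicOverlap) :
    inn (ψ 1) (ψ 2) = I * sicOverlap ∧ inn (ψ 1) (ψ 3) = -(I * sicOverlap) ∨
      inn (ψ 1) (ψ 2) = -(I * sicOverlap) ∧ inn (ψ 1) (ψ 3) = I * sicOverlap := by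
  have hI : ∀ j, j ≠ 0 → j ≠ 1 →
      inn (ψ 1) (ψ j) = I * sicOverlap ∨ inn (ψ 1) (ψ j) = -(I * sicOverlap) :=
    fun j hj0 hj1 => inn_eq_I_mul_sicOverlap_or_eq_neg (hψ.inn_self 0) (hψ.inn_self 1)
      (hψ.inn_self j) (h0 1 one_ne_zero) (h0 j hj0) (hψ.norm_inn_sq 1 j (Ne.symm hj1))
  have hne : inn (ψ 1) (ψ 2) ≠ inn (ψ 1) (ψ 3) := by
    intro h
    have h23 : ψ 2 = ψ 3 := by
      refine eq_of_forall_inn_eq (v := ![ψ 0, ψ 1]) (det_innGram_ne_zero_of_inn_eq_sicOverlap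
        (hψ.inn_self 0) (hψ.inn_self 1) (h0 1 one_ne_zero)) fun i => ?_
      fin_cases i
      · simp [h0]
      · exact h
    have := hψ.norm_inn_sq 2 3 (by decide)
    rw [h23, hψ.inn_self] at this
    norm_num at this
  rcases hI 2 (by decide) (by decide) with h2 | h2 <;>
    rcases hI 3 (by decide) (by decide) with h3 | h3
  · exact absurd (h2.trans h3.symm) hne
  · exact Or.inl ⟨h2, h3⟩
  · exact Or.inr ⟨h2, h3⟩
  · exact absurd (h2.trans h3.symm) hne

lemma isSICNormal_of_inn_eq (hψ : IsSIC ψ) (h0 : ∀ j, j ≠ 0 → inn (ψ 0) (ψ j) = sicOverlap)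
    (h2 : inn (ψ 1) (ψ 2) = I * sicOverlap) (h3 : inn (ψ 1) (ψ 3) = -(I * sicOverlap)) :
    IsSICNormal ψ := by
  have h10 : inn (ψ 1) (ψ 0) = sicOverlap := by rw [← conj_inn, h0 1 one_ne_zero, conj_ofReal]
  intro j
  fin_cases j <;> simp [hψ.inn_self, h0, h10, h2, h3]

theorem exists_isSICNormal (hψ : IsSIC ψ) : ∃ (σ : Equiv.Perm (Fin 4)) (e : Fin 4 → ℂ),
    (∀ j, ‖e j‖ = 1) ∧ IsSICNormal fun j => e j • ψ (σ j) := by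
  obtain ⟨d, hd, h0⟩ := hψ.exists_rephase
  have hχ := hψ.smul hd
  rcases hχ.inn_one_two_and_inn_one_three_eq h0 with ⟨h2, h3⟩ | ⟨h2, h3⟩
  · exact ⟨1, d, hd, hχ.isSICNormal_of_inn_eq h0 h2 h3⟩
  · refine ⟨Equiv.swap 2 3, d ∘ Equiv.swap 2 3, fun j => hd _,
      (hχ.comp_perm (Equiv.swap 2 3)).isSICNormal_of_inn_eq (fun j hj => h0 _ ?_) h3 h2⟩
    rwa [Ne, Equiv.swap_apply_eq_iff, Equiv.swap_apply_of_ne_of_ne (by decide) (by decide)]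

end IsSIC

/-- Any two SIC POVMs in dimension two are unitarily equivalent: for two
families of four unit vectors in `ℂ²` with pairwise squared overlaps `1/3`, some unitary maps
one family onto the other up to a permutation and phases. -/
theorem dim2_sic_unitarily_equivalent (ψ φ : Fin 4 → (Fin 2 → ℂ))
    (hψd : ∀ j, inn (ψ j) (ψ j) = 1)
    (hψ : ∀ j k, j ≠ k → ‖inn (ψ j) (ψ k)‖ ^ 2 = 1 / 3)
    (hφd : ∀ j, inn (φ j) (φ j) = 1)
    (hφ : ∀ j k, j ≠ k → ‖inn (φ j) (φ k)‖ ^ 2 = 1 / 3) :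
    ∃ U ∈ Matrix.unitaryGroup (Fin 2) ℂ, ∃ π : Equiv.Perm (Fin 4), ∃ c : Fin 4 → ℂ,
      ∀ j, ‖c j‖ = 1 ∧ U.mulVec (ψ j) = c j • φ (π j) := by
  obtain ⟨σ, e, he, hχ⟩ := IsSIC.exists_isSICNormal ⟨hψd, hψ⟩
  obtain ⟨τ, f, hf, hω⟩ := IsSIC.exists_isSICNormal ⟨hφd, hφ⟩
  obtain ⟨U, hU, hUχ⟩ := hχ.exists_mem_unitaryGroup_mulVec_eq hω
  refine ⟨U, hU, τ * σ⁻¹, fun k => (e (σ⁻¹ k))⁻¹ * f (σ⁻¹ k), fun k => ⟨by simp [he, hf], ?_⟩⟩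
  have he0 : e (σ⁻¹ k) ≠ 0 := norm_ne_zero_iff.mp (by simp [he])
  have h := hUχ (σ⁻¹ k)
  rw [mulVec_smul, show σ (σ⁻¹ k) = k from σ.apply_symm_apply k] at h
  rw [Equiv.Perm.mul_apply, mul_smul, ← h, smul_smul, inv_mul_cancel₀ he0, one_smul]
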